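/- arXiv:1912.01395 — 2 statements merged into one kernel-verified Lean document; each statement's English description precedes it below -/
import Mathlib

section
/- Let j ≥ 0 and 0 ≤ k ≤ 2^j − 1 be integers and set i = 2^j + k + 1. Then for every t ∈ [0,1], |p_{2,i}(t) − p_{2,i}(1)| ≤ 2·(2^{−(j+1)})². -/
open MeasureTheory Real

/-- Left endpoint of the support of the Haar wavelet indexed by `(j, k)`. -/
noncomputable def eta1 (j k : ℕ) : ℝ := (k : ℝ) / 2 ^ j

/-- Midpoint of the support of the Haar wavelet indexed by `(j, k)`. -/
noncomputable def eta2 (j k : ℕ) : ℝ := (2 * (k : ℝ) + 1) / 2 ^ (j + 1)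

/-- Right endpoint of the support of the Haar wavelet indexed by `(j, k)`. -/
noncomputable def eta3 (j k : ℕ) : ℝ := ((k : ℝ) + 1) / 2 ^ j

/-- The Haar wavelet `h_i` with `i = 2^j + k + 1`: equals `1` on `[η₁, η₂)`,
`-1` on `[η₂, η₃)` and `0` elsewhere. -/
noncomputable def haarJK (j k : ℕ) (t : ℝ) : ℝ :=
  if eta1 j k ≤ t ∧ t < eta2 j k then 1
  else if eta2 j k ≤ t ∧ t < eta3 j k then -1
  else 0

/-- `p_{2,i}(t) = ∫₀ᵗ (t - s) h_i(s) ds` where `i = 2^j + k + 1`. -/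
noncomputable def p2JK (j k : ℕ) (t : ℝ) : ℝ := ∫ s in (0:ℝ)..t, (t - s) * haarJK j k s

/-! The Haar wavelet is `H_{η₁} - 2 H_{η₂} + H_{η₃}` with `H_a` the Heaviside step at `a`, and
`∫₀ᵗ (t - s) H_a(s) ds = (t - a)₊² / 2` for `0 ≤ a`. Since `η₂ - η₁ = η₃ - η₂ = δ := 2^{-(j+1)}`,
`p_{2,i}` is the second difference with step `δ` of `x ↦ x₊² / 2`, a quadratic B-spline with values
in `[0, δ²]`. Hence `p_{2,i}(t)` and `p_{2,i}(1)` both lie in `[0, δ²]`. -/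

noncomputable def heaviside (a s : ℝ) : ℝ := if a ≤ s then 1 else 0

noncomputable def truncSq (x : ℝ) : ℝ := max x 0 ^ 2 / 2

lemma heaviside_monotone (a : ℝ) : Monotone (heaviside a) := by
  intro x y hxy
  unfold heaviside
  split_ifs <;> linarith

lemma intervalIntegrable_sub_mul_heaviside (a t b c : ℝ) :
    IntervalIntegrable (fun s => (t - s) * heaviside a s) volume b c :=
  (heaviside_monotone a).intervalIntegrable.continuousOn_mul (by fun_prop)

lemma integral_sub_mul_heaviside_of_le {a t b : ℝ} (hb : 0 ≤ b) (hba : b ≤ a) :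
    ∫ s in (0:ℝ)..b, (t - s) * heaviside a s = 0 := by
  refine intervalIntegral.integral_zero_ae ?_
  filter_upwards [volume.ae_ne a] with s hsa hs
  rw [Set.uIoc_of_le hb] at hs
  simp [heaviside, (lt_of_le_of_ne (hs.2.trans hba) hsa).not_ge]

lemma integral_sub_mul_heaviside {a t : ℝ} (ha : 0 ≤ a) (ht : 0 ≤ t) :
    ∫ s in (0:ℝ)..t, (t - s) * heaviside a s = truncSq (t - a) := by
  rcases le_total t a with hta | hat
  · rw [integral_sub_mul_heaviside_of_le ht hta, truncSq, max_eq_right (by linarith)]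
    norm_num
  · have hbelow := integral_sub_mul_heaviside_of_le (t := t) ha le_rfl
    have habove : ∫ s in a..t, (t - s) * heaviside a s = ∫ s in a..t, (t - s) := by
      refine intervalIntegral.integral_congr fun s hs => ?_
      rw [Set.uIcc_of_le hat] at hs
      simp [heaviside, hs.1]
    rw [← intervalIntegral.integral_add_adjacent_intervals
        (intervalIntegrable_sub_mul_heaviside a t 0 a)
        (intervalIntegrable_sub_mul_heaviside a t a t),
      hbelow, habove, intervalIntegral.integral_sub intervalIntegrable_const
        intervalIntegral.intervalIntegrable_id, intervalIntegral.integral_const, integral_id,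
      truncSq, max_eq_left (by linarith), smul_eq_mul]
    ring

lemma truncSq_secondDiff_mem_Icc (x : ℝ) {δ : ℝ} (hδ : 0 ≤ δ) :
    truncSq x - 2 * truncSq (x - δ) + truncSq (x - 2 * δ) ∈ Set.Icc 0 (δ ^ 2) := by
  unfold truncSq
  rcases le_total x 0 with h₀ | h₀ <;> rcases le_total (x - δ) 0 with h₁ | h₁ <;>
    rcases le_total (x - 2 * δ) 0 with h₂ | h₂ <;>
    simp only [max_eq_left, max_eq_right, h₀, h₁, h₂] <;>
    constructor <;> nlinarith

lemma ite_Ico_eq_heaviside {a b c : ℝ} (hab : a ≤ b) (hbc : b ≤ c) (s : ℝ) :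
    (if a ≤ s ∧ s < b then 1 else if b ≤ s ∧ s < c then -1 else 0) =
      heaviside a s - 2 * heaviside b s + heaviside c s := by
  unfold heaviside
  simp only [← not_le]
  by_cases h₁ : a ≤ s <;> by_cases h₂ : b ≤ s <;> by_cases h₃ : c ≤ s <;>
    simp only [h₁, h₂, h₃, true_and, false_and, not_true, not_false_eq_true, if_true, if_false] <;>
    first | (exfalso; linarith) | norm_num

lemma eta2_eq (j k : ℕ) : eta2 j k = eta1 j k + 1 / 2 ^ (j + 1) := by
  rw [eta1, eta2, pow_succ]; field_simp

lemma eta3_eq (j k : ℕ) : eta3 j k = eta1 j k + 2 * (1 / 2 ^ (j + 1)) := by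
  rw [eta1, eta3, pow_succ]; field_simp

lemma p2JK_eq_truncSq_secondDiff (j k : ℕ) {t : ℝ} (ht : 0 ≤ t) :
    p2JK j k t = truncSq (t - eta1 j k) - 2 * truncSq (t - eta1 j k - 1 / 2 ^ (j + 1)) +
      truncSq (t - eta1 j k - 2 * (1 / 2 ^ (j + 1))) := by
  have hη₁ : 0 ≤ eta1 j k := by rw [eta1]; positivity
  have hδ : (0:ℝ) ≤ 1 / 2 ^ (j + 1) := by positivity
  have hhaar : ∀ s, (t - s) * haarJK j k s = (t - s) * heaviside (eta1 j k) s -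
      2 * ((t - s) * heaviside (eta2 j k) s) + (t - s) * heaviside (eta3 j k) s := by
    intro s
    rw [haarJK, ite_Ico_eq_heaviside (by rw [eta2_eq]; linarith)
      (by rw [eta2_eq, eta3_eq]; linarith)]
    ring
  simp_rw [p2JK, hhaar]
  rw [intervalIntegral.integral_add ((intervalIntegrable_sub_mul_heaviside _ _ _ _).sub
      ((intervalIntegrable_sub_mul_heaviside _ _ _ _).const_mul 2))
      (intervalIntegrable_sub_mul_heaviside _ _ _ _),
    intervalIntegral.integral_sub (intervalIntegrable_sub_mul_heaviside _ _ _ _)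
      ((intervalIntegrable_sub_mul_heaviside _ _ _ _).const_mul 2),
    intervalIntegral.integral_const_mul, integral_sub_mul_heaviside hη₁ ht,
    integral_sub_mul_heaviside (by rw [eta2_eq]; linarith) ht,
    integral_sub_mul_heaviside (by rw [eta3_eq]; linarith) ht, eta2_eq, eta3_eq]
  ring_nf

lemma p2JK_mem_Icc (j k : ℕ) {t : ℝ} (ht : 0 ≤ t) :
    p2JK j k t ∈ Set.Icc 0 ((1 / 2 ^ (j + 1)) ^ 2) := by
  rw [p2JK_eq_truncSq_secondDiff j k ht]
  exact truncSq_secondDiff_mem_Icc _ (by positivity)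

theorem p2_diff_bound_general (j k : ℕ) :
    ∀ t ∈ Set.Icc (0:ℝ) 1,
      |p2JK j k t - p2JK j k 1| ≤ 2 * (1 / 2 ^ (j + 1)) ^ 2 := by
  intro t ht
  obtain ⟨hpt₀, hpt⟩ := p2JK_mem_Icc j k ht.1
  obtain ⟨hp₁₀, hp₁⟩ := p2JK_mem_Icc j k zero_le_one
  calc |p2JK j k t - p2JK j k 1| ≤ (1 / 2 ^ (j + 1)) ^ 2 :=
        abs_sub_le_of_nonneg_of_le hpt₀ hpt hp₁₀ hp₁
    _ ≤ 2 * (1 / 2 ^ (j + 1)) ^ 2 := le_mul_of_one_le_left (sq_nonneg _) one_le_two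

/-- `|p_{2,i}(t) - p_{2,i}(1)| ≤ 2·(2^{-(j+1)})²` on `[0,1]`. -/
theorem p2_diff_bound (j k : ℕ) (hk : k ≤ 2 ^ j - 1) :
    ∀ t ∈ Set.Icc (0:ℝ) 1,
      |p2JK j k t - p2JK j k 1| ≤ 2 * (1 / 2 ^ (j + 1)) ^ 2 :=
  p2_diff_bound_general j k
end

section
/- (Convergence of the Haar wavelet method for the BVP.) Let y, z : [0,1] → ℝ be three times differentiable with |y'''(t)| ≤ ξ₁ and |z'''(t)| ≤ ξ₂ for all t ∈ [0,1], where ξ₂ ≤ ξ₁ and ξ₁ > 0. Define the Haar coefficients a_{2^j+k+1} = 2^j ∫₀¹ y''(t) h_{2^j+k+1}(t) dt and b_{2^j+k+1} = 2^j ∫₀¹ z''(t) h_{2^j+k+1}(t) dt, and for an integer J ≥ 0 define Ẽ_{M1}(t) = Σ_{j=J+1}^∞ Σ_{k=0}^{2^j−1} a_{2^j+k+1} (p_{2,2^j+k+1}(t) − p_{2,2^j+k+1}(1)), Ẽ_{M2}(t) defined analogously with the coefficients b, and ‖Ẽ_M‖₂ = ‖Ẽ_{M1}‖₂ + ‖Ẽ_{M2}‖₂.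 Then for every ε > 0, if J > log₂(√(2ξ₁/(3ε))) − 1, then ‖Ẽ_M‖₂ < ε. -/
open MeasureTheory Real

/-- The Haar coefficient `2^j ∫₀¹ f(t) h_{2^j+k+1}(t) dt` of a function `f`. -/
noncomputable def haarCoeff (f : ℝ → ℝ) (j k : ℕ) : ℝ :=
  2 ^ j * ∫ t in (0:ℝ)..1, f t * haarJK j k t

/-- Truncation error of the Haar expansion at resolution `J`:
`Σ_{j=J+1}^∞ Σ_{k=0}^{2^j-1} c_{j,k} p_{2,2^j+k+1}(t)` (here the outer sum is
reindexed by `j = J + 1 + m`). -/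
noncomputable def truncErr (c : ℕ → ℕ → ℝ) (J : ℕ) (t : ℝ) : ℝ :=
  ∑' m : ℕ, ∑ k ∈ Finset.range (2 ^ (J + 1 + m)), c (J + 1 + m) k * p2JK (J + 1 + m) k t

/-- The `L²([0,1])` norm of a function. -/
noncomputable def L2norm (f : ℝ → ℝ) : ℝ := Real.sqrt (∫ t in (0:ℝ)..1, f t ^ 2)

/-- Truncation error of the Haar expansion in the BVP case, at resolution `J`:
`Σ_{j=J+1}^∞ Σ_{k=0}^{2^j-1} c_{j,k} (p_{2,2^j+k+1}(t) - p_{2,2^j+k+1}(1))`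
(the outer sum is reindexed by `j = J + 1 + m`). -/
noncomputable def truncErrBVP (c : ℕ → ℕ → ℝ) (J : ℕ) (t : ℝ) : ℝ :=
  ∑' m : ℕ, ∑ k ∈ Finset.range (2 ^ (J + 1 + m)),
    c (J + 1 + m) k * (p2JK (J + 1 + m) k t - p2JK (J + 1 + m) k 1)

open Set intervalIntegral

/-!
Both the Haar coefficient `2^j ∫₀¹ y'' h_i` and the difference `p_{2,i}(t) - p_{2,i}(1)` are of the
form `∫₀¹ g h_i` with `g` Lipschitz on `[0,1]`: take `g = y''` (constant `ξ₁`), respectively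
`g(s) = max(t,s) - 1` (constant `1`), because `(t - s)₊ - (1 - s) = max(t,s) - 1`. Translating the
negative half of `h_i` onto its positive half gives `∫₀¹ g h_i = ∫_{η₁}^{η₂} (g(s) - g(s + δ)) ds`
with `δ = 2^{-(j+1)}`, so `|∫₀¹ g h_i| ≤ L δ²`. Hence level `j` contributes at most
`2^j · (ξ₁δ/2) · δ² = ξ₁ 4^{-(j+2)}` at every `t ∈ [0,1]`, the tail from level `J+1` on is at most
`ξ₁ / (3·4^{J+2})`, and the hypothesis on `J` is exactly `2ξ₁/(3ε) < 4^{J+1}`.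
-/

noncomputable def haarHalfWidth (j : ℕ) : ℝ := ((2 : ℝ) ^ (j + 1))⁻¹

lemma haarHalfWidth_pos (j : ℕ) : 0 < haarHalfWidth j := by
  unfold haarHalfWidth; positivity

lemma two_pow_mul_haarHalfWidth (j : ℕ) : 2 ^ j * haarHalfWidth j = 1 / 2 := by
  unfold haarHalfWidth; rw [pow_succ]; field_simp

lemma haarHalfWidth_sq (j : ℕ) : haarHalfWidth j ^ 2 = (4 ^ (j + 1))⁻¹ := by
  unfold haarHalfWidth; rw [inv_pow, ← pow_mul, mul_comm, pow_mul]; norm_num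

lemma eta2_eq_eta1_add (j k : ℕ) : eta2 j k = eta1 j k + haarHalfWidth j := by
  unfold eta2 eta1 haarHalfWidth; rw [pow_succ]; field_simp

lemma eta3_eq_eta2_add (j k : ℕ) : eta3 j k = eta2 j k + haarHalfWidth j := by
  unfold eta3 eta2 haarHalfWidth; rw [pow_succ]; field_simp; ring

lemma eta1_nonneg (j k : ℕ) : 0 ≤ eta1 j k := by
  unfold eta1; positivity

lemma eta3_le_one {j k : ℕ} (hk : k < 2 ^ j) : eta3 j k ≤ 1 := by
  unfold eta3
  rw [div_le_one (by positivity)]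
  exact_mod_cast hk

lemma haarJK_eq_one_of_mem {j k : ℕ} {s : ℝ} (hs : s ∈ Ico (eta1 j k) (eta2 j k)) :
    haarJK j k s = 1 :=
  if_pos hs

lemma haarJK_eq_neg_one_of_mem {j k : ℕ} {s : ℝ} (hs : s ∈ Ico (eta2 j k) (eta3 j k)) :
    haarJK j k s = -1 := by
  unfold haarJK
  rw [if_neg (fun h => (h.2.trans_le hs.1).false),
    if_pos (show eta2 j k ≤ s ∧ s < eta3 j k from hs)]

lemma haarJK_eq_zero_of_notMem {j k : ℕ} {s : ℝ} (hs : s ∉ Ico (eta1 j k) (eta3 j k)) :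
    haarJK j k s = 0 := by
  have h12 := eta2_eq_eta1_add j k
  have h23 := eta3_eq_eta2_add j k
  have hD := haarHalfWidth_pos j
  unfold haarJK
  rw [if_neg, if_neg] <;> rintro ⟨h₁, h₂⟩ <;> exact hs ⟨by linarith, by linarith⟩

lemma intervalIntegrable_haarJK (j k : ℕ) (a b : ℝ) :
    IntervalIntegrable (haarJK j k) volume a b := by
  have hmeas : Measurable (haarJK j k) := by
    unfold haarJK
    exact Measurable.ite measurableSet_Ico measurable_const
      (Measurable.ite measurableSet_Ico measurable_const measurable_const)
  refine (intervalIntegrable_const (c := (1 : ℝ))).mono_fun hmeas.aestronglyMeasurable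
    (ae_of_all _ fun s => ?_)
  show ‖haarJK j k s‖ ≤ ‖(1 : ℝ)‖
  unfold haarJK
  split_ifs <;> norm_num

lemma integral_mul_haarJK {g : ℝ → ℝ} (hg : Continuous g) {j k : ℕ} {a b : ℝ}
    (ha : a ≤ eta1 j k) (hb : eta3 j k ≤ b) :
    ∫ s in a..b, g s * haarJK j k s
      = ∫ s in eta1 j k..eta2 j k, (g s - g (s + haarHalfWidth j)) := by
  have hF : ∀ c d, IntervalIntegrable (fun s => g s * haarJK j k s) volume c d :=
    fun c d => (intervalIntegrable_haarJK j k c d).continuousOn_mul hg.continuousOn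
  have hD := haarHalfWidth_pos j
  have h12 := eta2_eq_eta1_add j k
  have h23 := eta3_eq_eta2_add j k
  have hle12 : eta1 j k ≤ eta2 j k := by linarith
  have hle23 : eta2 j k ≤ eta3 j k := by linarith
  have e0 : ∫ s in a..eta1 j k, g s * haarJK j k s = 0 := by
    rw [integral_congr_Ioo_of_le ha (g := fun _ => 0) fun s hs => by
      simp [haarJK_eq_zero_of_notMem fun h => (hs.2.trans_le h.1).false]]
    simp
  have e12 : ∫ s in eta1 j k..eta2 j k, g s * haarJK j k s = ∫ s in eta1 j k..eta2 j k, g s :=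
    integral_congr_Ioo_of_le hle12 fun s hs => by
      simp [haarJK_eq_one_of_mem (Ioo_subset_Ico_self hs)]
  have e23 : ∫ s in eta2 j k..eta3 j k, g s * haarJK j k s
      = -∫ s in eta1 j k..eta2 j k, g (s + haarHalfWidth j) := by
    rw [integral_congr_Ioo_of_le hle23 (g := fun s => -g s) fun s hs => by
      simp [haarJK_eq_neg_one_of_mem (Ioo_subset_Ico_self hs)],
      intervalIntegral.integral_neg, integral_comp_add_right, ← h12, ← h23]
  have e3 : ∫ s in eta3 j k..b, g s * haarJK j k s = 0 := by
    rw [integral_congr_Ioo_of_le hb (g := fun _ => 0) fun s hs => by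
      simp [haarJK_eq_zero_of_notMem fun h => (h.2.trans hs.1).false]]
    simp
  have split : ∫ s in a..b, g s * haarJK j k s
      = (∫ s in a..eta1 j k, g s * haarJK j k s)
        + ((∫ s in eta1 j k..eta2 j k, g s * haarJK j k s)
          + ((∫ s in eta2 j k..eta3 j k, g s * haarJK j k s)
            + ∫ s in eta3 j k..b, g s * haarJK j k s)) := by
    rw [integral_add_adjacent_intervals (hF _ _) (hF _ _),
      integral_add_adjacent_intervals (hF _ _) (hF _ _),
      integral_add_adjacent_intervals (hF _ _) (hF _ _)]
  rw [split, e0, e12, e23, e3, integral_sub (hg.intervalIntegrable _ _)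
    ((show Continuous fun s => g (s + haarHalfWidth j) by fun_prop).intervalIntegrable _ _)]
  ring

lemma abs_integral_mul_haarJK_le {g : ℝ → ℝ} (hg : Continuous g) {L : ℝ}
    (hL : ∀ x ∈ Icc (0 : ℝ) 1, ∀ y ∈ Icc (0 : ℝ) 1, |g y - g x| ≤ L * |y - x|)
    {j k : ℕ} (hk : k < 2 ^ j) :
    |∫ s in (0 : ℝ)..1, g s * haarJK j k s| ≤ L * haarHalfWidth j ^ 2 := by
  have hD := haarHalfWidth_pos j
  have h12 := eta2_eq_eta1_add j k
  have h23 := eta3_eq_eta2_add j k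
  have h0 := eta1_nonneg j k
  have h3 := eta3_le_one hk
  rw [integral_mul_haarJK hg h0 h3, ← Real.norm_eq_abs]
  calc ‖∫ s in eta1 j k..eta2 j k, (g s - g (s + haarHalfWidth j))‖
      ≤ L * haarHalfWidth j * |eta2 j k - eta1 j k| := by
        refine norm_integral_le_of_norm_le_const fun s hs => ?_
        rw [uIoc_of_le (by linarith)] at hs
        have := hL (s + haarHalfWidth j) ⟨by linarith [hs.1], by linarith [hs.2]⟩
          s ⟨by linarith [hs.1], by linarith [hs.2]⟩
        rwa [sub_add_cancel_left, abs_neg, abs_of_pos hD, ← Real.norm_eq_abs] at this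
    _ = L * haarHalfWidth j ^ 2 := by
        rw [h12, add_sub_cancel_left, abs_of_pos hD]; ring

lemma abs_haarCoeff_le {f : ℝ → ℝ} {ξ : ℝ} (hf : Differentiable ℝ f)
    (hb : ∀ t ∈ Icc (0 : ℝ) 1, |deriv f t| ≤ ξ) {j k : ℕ} (hk : k < 2 ^ j) :
    |haarCoeff f j k| ≤ ξ * haarHalfWidth j / 2 := by
  have hLip : ∀ x ∈ Icc (0 : ℝ) 1, ∀ y ∈ Icc (0 : ℝ) 1, |f y - f x| ≤ ξ * |y - x| :=
    fun x hx y hy => (convex_Icc 0 1).norm_image_sub_le_of_norm_deriv_le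
      (fun t _ => hf t) hb hx hy
  unfold haarCoeff
  rw [abs_mul, abs_of_pos (by positivity)]
  calc 2 ^ j * |∫ t in (0 : ℝ)..1, f t * haarJK j k t|
      ≤ 2 ^ j * (ξ * haarHalfWidth j ^ 2) := by
        gcongr; exact abs_integral_mul_haarJK_le hf.continuous hLip hk
    _ = (2 ^ j * haarHalfWidth j) * (ξ * haarHalfWidth j) := by ring
    _ = ξ * haarHalfWidth j / 2 := by rw [two_pow_mul_haarHalfWidth]; ring

lemma p2JK_sub_p2JK_one {t : ℝ} (ht : t ∈ Icc (0 : ℝ) 1) (j k : ℕ) :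
    p2JK j k t - p2JK j k 1 = ∫ s in (0 : ℝ)..1, (max t s - 1) * haarJK j k s := by
  have hF : ∀ (c : ℝ → ℝ), Continuous c → ∀ a b,
      IntervalIntegrable (fun s => c s * haarJK j k s) volume a b :=
    fun c hc a b => (intervalIntegrable_haarJK j k a b).continuousOn_mul hc.continuousOn
  have hsplit : ∫ s in (0 : ℝ)..1, (max t s - 1) * haarJK j k s
      = (∫ s in (0 : ℝ)..t, (t - 1) * haarJK j k s) + ∫ s in t..1, -((1 - s) * haarJK j k s) := by
    rw [← integral_add_adjacent_intervals (hF _ (by fun_prop) 0 t) (hF _ (by fun_prop) t 1)]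
    congr 1
    · refine integral_congr fun s hs => ?_
      rw [uIcc_of_le ht.1] at hs
      simp only [max_eq_left hs.2]
    · refine integral_congr fun s hs => ?_
      rw [uIcc_of_le ht.2] at hs
      simp only [max_eq_right hs.1]
      ring
  have hp1 : p2JK j k 1
      = (∫ s in (0 : ℝ)..t, (1 - s) * haarJK j k s) + ∫ s in t..1, (1 - s) * haarJK j k s :=
    (integral_add_adjacent_intervals (hF _ (by fun_prop) 0 t) (hF _ (by fun_prop) t 1)).symm
  have hpt : ∫ s in (0 : ℝ)..t, (t - 1) * haarJK j k s
      = p2JK j k t - ∫ s in (0 : ℝ)..t, (1 - s) * haarJK j k s := by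
    unfold p2JK
    rw [← integral_sub (hF _ (by fun_prop) 0 t) (hF _ (by fun_prop) 0 t)]
    congr 1
    ext s
    ring
  rw [hsplit, hpt, intervalIntegral.integral_neg, hp1]
  ring

lemma abs_p2JK_sub_p2JK_one_le {t : ℝ} (ht : t ∈ Icc (0 : ℝ) 1) {j k : ℕ} (hk : k < 2 ^ j) :
    |p2JK j k t - p2JK j k 1| ≤ haarHalfWidth j ^ 2 := by
  rw [p2JK_sub_p2JK_one ht, ← one_mul (haarHalfWidth j ^ 2)]
  refine abs_integral_mul_haarJK_le (by fun_prop) (fun x _ y _ => ?_) hk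
  rw [sub_sub_sub_cancel_right, one_mul, max_comm t, max_comm t]
  exact abs_max_sub_max_le_abs y x t

lemma abs_sum_haarCoeff_mul_le {f : ℝ → ℝ} {ξ : ℝ} (hf : Differentiable ℝ f)
    (hb : ∀ t ∈ Icc (0 : ℝ) 1, |deriv f t| ≤ ξ) (j : ℕ) {t : ℝ} (ht : t ∈ Icc (0 : ℝ) 1) :
    |∑ k ∈ Finset.range (2 ^ j), haarCoeff f j k * (p2JK j k t - p2JK j k 1)|
      ≤ ξ / 4 ^ (j + 2) := by
  have hξ : 0 ≤ ξ := (abs_nonneg _).trans (hb 0 (by simp))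
  calc |∑ k ∈ Finset.range (2 ^ j), haarCoeff f j k * (p2JK j k t - p2JK j k 1)|
      ≤ ∑ k ∈ Finset.range (2 ^ j), |haarCoeff f j k * (p2JK j k t - p2JK j k 1)| :=
        Finset.abs_sum_le_sum_abs _ _
    _ ≤ ∑ k ∈ Finset.range (2 ^ j), ξ * haarHalfWidth j / 2 * haarHalfWidth j ^ 2 := by
        refine Finset.sum_le_sum fun k hk => ?_
        rw [Finset.mem_range] at hk
        rw [abs_mul]
        exact mul_le_mul (abs_haarCoeff_le hf hb hk) (abs_p2JK_sub_p2JK_one_le ht hk)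
          (abs_nonneg _) (by have := haarHalfWidth_pos j; positivity)
    _ = ξ / 4 ^ (j + 2) := by
        rw [Finset.sum_const, Finset.card_range, nsmul_eq_mul, Nat.cast_pow, Nat.cast_ofNat,
          show (2 : ℝ) ^ j * (ξ * haarHalfWidth j / 2 * haarHalfWidth j ^ 2)
            = (2 ^ j * haarHalfWidth j) * ξ * haarHalfWidth j ^ 2 / 2 by ring,
          two_pow_mul_haarHalfWidth, haarHalfWidth_sq, pow_succ 4 (j + 1)]
        field_simp
        ring

lemma abs_truncErrBVP_le {f : ℝ → ℝ} {ξ : ℝ} (hf : Differentiable ℝ f)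
    (hb : ∀ t ∈ Icc (0 : ℝ) 1, |deriv f t| ≤ ξ) (J : ℕ) {t : ℝ} (ht : t ∈ Icc (0 : ℝ) 1) :
    |truncErrBVP (haarCoeff f) J t| ≤ ξ / (3 * 4 ^ (J + 2)) := by
  have hgeom : HasSum (fun m : ℕ => ξ / 4 ^ (J + 3) * (1 / 4 : ℝ) ^ m)
      (ξ / (3 * 4 ^ (J + 2))) := by
    have hsum : ξ / (3 * 4 ^ (J + 2)) = ξ / 4 ^ (J + 3) * (1 - 1 / 4)⁻¹ := by
      rw [pow_succ 4 (J + 2)]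
      field_simp
      norm_num
    rw [hsum]
    exact (hasSum_geometric_of_lt_one (by norm_num) (by norm_num)).mul_left _
  rw [← Real.norm_eq_abs]
  refine tsum_of_norm_bounded hgeom fun m => ?_
  rw [Real.norm_eq_abs]
  convert abs_sum_haarCoeff_mul_le hf hb (J + 1 + m) ht using 1
  rw [show J + 1 + m + 2 = J + 3 + m by ring, pow_add, one_div_pow]
  field_simp
  ring

lemma L2norm_le {f : ℝ → ℝ} {C : ℝ} (hC : 0 ≤ C)
    (h : ∀ t ∈ Icc (0 : ℝ) 1, |f t| ≤ C) : L2norm f ≤ C := by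
  have hint : ∫ t in (0 : ℝ)..1, f t ^ 2 ≤ C ^ 2 := by
    by_cases hi : IntervalIntegrable (fun t => f t ^ 2) volume 0 1
    · simpa using integral_mono_on zero_le_one hi intervalIntegrable_const fun t ht =>
        sq_le_sq' (abs_le.mp (h t ht)).1 (abs_le.mp (h t ht)).2
    · rw [integral_undef hi]
      positivity
  unfold L2norm
  calc √(∫ t in (0 : ℝ)..1, f t ^ 2) ≤ √(C ^ 2) := Real.sqrt_le_sqrt hint
    _ = C := Real.sqrt_sq hC

lemma L2norm_truncErrBVP_le {f : ℝ → ℝ} {ξ : ℝ} (hf : Differentiable ℝ f)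
    (hb : ∀ t ∈ Icc (0 : ℝ) 1, |deriv f t| ≤ ξ) (J : ℕ) :
    L2norm (truncErrBVP (haarCoeff f) J) ≤ ξ / (3 * 4 ^ (J + 2)) := by
  have hξ : 0 ≤ ξ := (abs_nonneg _).trans (hb 0 (by simp))
  exact L2norm_le (by positivity) fun t ht => abs_truncErrBVP_le hf hb J ht

lemma lt_four_pow_of_logb_sqrt_lt {x : ℝ} {n : ℕ} (h : logb 2 √x < n) : x < 4 ^ n := by
  rcases le_or_gt x 0 with hx | hx
  · exact hx.trans_lt (by positivity)
  have hsqrt : √x < 2 ^ n := by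
    rwa [Real.logb_lt_iff_lt_rpow (by norm_num) (Real.sqrt_pos.mpr hx), Real.rpow_natCast] at h
  calc x = √x ^ 2 := (Real.sq_sqrt hx.le).symm
    _ < (2 ^ n) ^ 2 := by gcongr
    _ = 4 ^ n := by rw [← pow_mul, mul_comm, pow_mul]; norm_num

theorem haar_bvp_convergence_general (y z : ℝ → ℝ) (ξ₁ ξ₂ : ℝ)
    (hξ : ξ₂ ≤ ξ₁)
    (hy'' : Differentiable ℝ (deriv (deriv y)))
    (hz'' : Differentiable ℝ (deriv (deriv z)))
    (hby : ∀ t ∈ Set.Icc (0:ℝ) 1, |deriv (deriv (deriv y)) t| ≤ ξ₁)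
    (hbz : ∀ t ∈ Set.Icc (0:ℝ) 1, |deriv (deriv (deriv z)) t| ≤ ξ₂)
    (J : ℕ) (ε : ℝ) (hε : 0 < ε)
    (hJ : (J : ℝ) > Real.logb 2 (Real.sqrt (2 * ξ₁ / (3 * ε))) - 1) :
    L2norm (truncErrBVP (haarCoeff (deriv (deriv y))) J) +
      L2norm (truncErrBVP (haarCoeff (deriv (deriv z))) J) < ε := by
  have hJ' : 2 * ξ₁ / (3 * ε) < 4 ^ (J + 1) :=
    lt_four_pow_of_logb_sqrt_lt (by push_cast; linarith)
  rw [div_lt_iff₀ (by positivity)] at hJ'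
  have hpos : 0 < ε * 4 ^ (J + 1) := by positivity
  calc L2norm (truncErrBVP (haarCoeff (deriv (deriv y))) J) +
        L2norm (truncErrBVP (haarCoeff (deriv (deriv z))) J)
      ≤ ξ₁ / (3 * 4 ^ (J + 2)) + ξ₂ / (3 * 4 ^ (J + 2)) :=
        add_le_add (L2norm_truncErrBVP_le hy'' hby J) (L2norm_truncErrBVP_le hz'' hbz J)
    _ < ε := by
        rw [← add_div, div_lt_iff₀ (by positivity), pow_succ 4 (J + 1)]
        linarith

/-- Convergence of the Haar wavelet method for the BVP:
if `J > log₂(√(2ξ₁/(3ε))) - 1` then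
`‖Ẽ_M‖₂ = ‖Ẽ_{M1}‖₂ + ‖Ẽ_{M2}‖₂ < ε`. -/
theorem haar_bvp_convergence (y z : ℝ → ℝ) (ξ₁ ξ₂ : ℝ)
    (hξ : ξ₂ ≤ ξ₁) (hξ₁ : 0 < ξ₁)
    (hy : Differentiable ℝ y) (hy' : Differentiable ℝ (deriv y))
    (hy'' : Differentiable ℝ (deriv (deriv y)))
    (hz : Differentiable ℝ z) (hz' : Differentiable ℝ (deriv z))
    (hz'' : Differentiable ℝ (deriv (deriv z)))
    (hby : ∀ t ∈ Set.Icc (0:ℝ) 1, |deriv (deriv (deriv y)) t| ≤ ξ₁)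
    (hbz : ∀ t ∈ Set.Icc (0:ℝ) 1, |deriv (deriv (deriv z)) t| ≤ ξ₂)
    (J : ℕ) (ε : ℝ) (hε : 0 < ε)
    (hJ : (J : ℝ) > Real.logb 2 (Real.sqrt (2 * ξ₁ / (3 * ε))) - 1) :
    L2norm (truncErrBVP (haarCoeff (deriv (deriv y))) J) +
      L2norm (truncErrBVP (haarCoeff (deriv (deriv z))) J) < ε :=
  haar_bvp_convergence_general y z ξ₁ ξ₂ hξ hy'' hz'' hby hbz J ε hε hJ
end
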